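/- arXiv:math/0412388 — 8 statements merged into one kernel-verified Lean document; each statement's English description precedes it below -/
import Mathlib

section
/- Let i : A₀ → B₀ be a morphism in T. Then i is F-monic (i.e. the induced map Hom_T(B₀, G) → Hom_T(A₀, G) is surjective for every F-injective object G of T) if and only if F(i) : F(A₀) → F(B₀) is a monomorphism in A. -/
open CategoryTheory Limits Pretriangulated

universe w v u v' u'

variable {T : Type u} [Category.{v} T] [HasZeroObject T] [HasShift T ℤ]
  [Preadditive T] [∀ n : ℤ, (CategoryTheory.shiftFunctor T n).Additive] [Pretriangulated T]
variable {A : Type u'} [Category.{v'} A] [Abelian A]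

/-- `E` is an `(F,I)`-Eilenberg–MacLane object: there is an isomorphism
`Hom_T(X, E) ≅ Hom_A(F X, I)` natural in `X` such that the canonical map `F E ⟶ I`
(the image of the identity of `E`) is an isomorphism. -/
def IsEMObject (F : T ⥤ A) (I : A) (E : T) : Prop :=
  ∃ e : ∀ X : T, (X ⟶ E) ≃ (F.obj X ⟶ I),
    (∀ ⦃X Y : T⦄ (f : X ⟶ Y) (g : Y ⟶ E), e X (f ≫ g) = F.map f ≫ e Y g) ∧
    IsIso (e E (𝟙 E))

/-- An object of `T` is `F`-injective if it is an `(F,I)`-Eilenberg–MacLane object for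
some injective object `I` of `A`. -/
def FInjective (F : T ⥤ A) (E : T) : Prop :=
  ∃ I : A, Injective I ∧ IsEMObject F I E

/-- A map `i : A₀ ⟶ B₀` in `T` is `F`-monic if `Hom_T(B₀, G) → Hom_T(A₀, G)` is surjective
for every `F`-injective object `G`. -/
def FMonic (F : T ⥤ A) {A₀ B₀ : T} (i : A₀ ⟶ B₀) : Prop :=
  ∀ G : T, FInjective F G → Function.Surjective (fun g : B₀ ⟶ G => i ≫ g)

/-- A map is `F`-monic if and only if its image under `F` is a monomorphism. -/
theorem fMonic_iff_mono_map [EnoughInjectives A]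
    (F : T ⥤ A) [F.Additive] [F.IsHomological]
    (SA : A ≌ A) (comm : CategoryTheory.shiftFunctor T (1 : ℤ) ⋙ F ≅ F ⋙ SA.functor)
    (hEM : ∀ I : A, Injective I → ∃ E : T, IsEMObject F I E)
    {A₀ B₀ : T} (i : A₀ ⟶ B₀) :
    FMonic F i ↔ Mono (F.map i) := by
  constructor
  · intro hm
    obtain ⟨E, e, hnat, _⟩ := hEM (Injective.under (F.obj A₀)) (Injective.injective_under _)
    obtain ⟨h, hh⟩ := hm E ⟨_, Injective.injective_under _, e, hnat, ‹_›⟩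
      ((e A₀).symm (Injective.ι (F.obj A₀)))
    simp only at hh
    have key : F.map i ≫ e B₀ h = Injective.ι (F.obj A₀) := by
      rw [← hnat i h, hh, Equiv.apply_symm_apply]
    have : Mono (F.map i ≫ e B₀ h) := by rw [key]; infer_instance
    exact mono_of_mono (F.map i) (e B₀ h)
  · intro hmono G hG g
    obtain ⟨I, hI, e, hnat, _⟩ := hG
    obtain ⟨φ, hφ⟩ := hI.factors (e A₀ g) (F.map i)
    refine ⟨(e B₀).symm φ, (e A₀).injective ?_⟩
    simp only [hnat i, Equiv.apply_symm_apply, hφ]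
end

section
/- An object E of T is F-injective if and only if it is injective with respect to F-monic maps, i.e. if and only if for every F-monic morphism i : A₀ → B₀ in T the induced map Hom_T(B₀, E) → Hom_T(A₀, E) is surjective. (In other words, the class of F-injective objects coincides with the class of objects injective relative to the class of F-monic maps.) -/
open CategoryTheory Limits Pretriangulated

universe w v u v' u'

variable {T : Type u} [Category.{v} T] [HasZeroObject T] [HasShift T ℤ]
  [Preadditive T] [∀ n : ℤ, (CategoryTheory.shiftFunctor T n).Additive] [Pretriangulated T]
variable {A : Type u'} [Category.{v'} A] [Abelian A]

/-- An object `E` of `T` is `F`-injective if and only if it is injective relative to the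
class of `F`-monic maps. -/
theorem fInjective_iff_injective_wrt_fMonic [EnoughInjectives A]
    (F : T ⥤ A) [F.Additive] [F.IsHomological]
    (SA : A ≌ A) (comm : CategoryTheory.shiftFunctor T (1 : ℤ) ⋙ F ≅ F ⋙ SA.functor)
    (hEM : ∀ I : A, Injective I → ∃ E : T, IsEMObject F I E)
    (hdet : ∀ ⦃X Y : T⦄ (f : X ⟶ Y), IsIso f ↔ IsIso (F.map f))
    (E : T) :
    FInjective F E ↔
      ∀ ⦃A₀ B₀ : T⦄ (i : A₀ ⟶ B₀), FMonic F i →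
        Function.Surjective (fun g : B₀ ⟶ E => i ≫ g) := by
  constructor
  · intro hE A₀ B₀ i hi
    exact hi E hE
  · intro hE
    obtain ⟨E', hEM'⟩ := hEM (Injective.under (F.obj E)) inferInstance
    obtain ⟨e, hnat, hiso⟩ := hEM'
    haveI := hiso
    set u : F.obj E ⟶ Injective.under (F.obj E) := Injective.ι _ with hu
    set φ : F.obj E' ⟶ Injective.under (F.obj E) := e E' (𝟙 E') with hφ
    set i : E ⟶ E' := (e E).symm u with hidef
    have hei : e E i = u := (e E).apply_symm_apply u
    have hFmap : ∀ {X : T} (h : X ⟶ E'), F.map h = e X h ≫ inv φ := by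
      intro X h
      have h1 : e X (h ≫ 𝟙 E') = F.map h ≫ e E' (𝟙 E') := hnat h (𝟙 E')
      rw [Category.comp_id] at h1
      rw [h1, ← hφ, Category.assoc, IsIso.hom_inv_id, Category.comp_id]
    have hFi : F.map i = u ≫ inv φ := by rw [hFmap i, hei]
    haveI : Mono (F.map i) := by rw [hFi]; infer_instance
    have hmono : FMonic F i := by
      intro G hG g
      obtain ⟨J, hJ, eG, hGnat, _⟩ := hG
      haveI := hJ
      refine ⟨(eG E').symm (Injective.factorThru (eG E g) (F.map i)), ?_⟩
      apply (eG E).injective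
      simp only
      rw [hGnat, Equiv.apply_symm_apply, Injective.comp_factorThru]
    obtain ⟨r, hr⟩ := hE i hmono (𝟙 E)
    simp only at hr
    have hur : u ≫ inv φ ≫ F.map r = 𝟙 (F.obj E) := by
      rw [← Category.assoc, ← hFi, ← F.map_comp, hr, F.map_id]
    refine ⟨F.obj E, ⟨fun {X Y} f g _ => ?_⟩, ?_⟩
    · refine ⟨Injective.factorThru (f ≫ u) g ≫ inv φ ≫ F.map r, ?_⟩
      rw [← Category.assoc, Injective.comp_factorThru, Category.assoc, hur,
        Category.comp_id]
    · refine ⟨fun X => ⟨fun g => F.map g, fun v => (e X).symm (v ≫ u) ≫ r, ?_, ?_⟩,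
        ?_, ?_⟩
      · intro g
        have h1 : e X (g ≫ i) = F.map g ≫ u := by rw [hnat, hei]
        have h2 : (e X).symm (F.map g ≫ u) = g ≫ i := by
          rw [← h1, Equiv.symm_apply_apply]
        simp only [h2, Category.assoc, hr, Category.comp_id]
      · intro v
        simp only [F.map_comp, hFmap ((e X).symm (v ≫ u)), Equiv.apply_symm_apply]
        rw [Category.assoc, Category.assoc, hur, Category.comp_id]
      · intro X Y f g
        exact F.map_comp f g
      · show IsIso (F.map (𝟙 E))
        rw [F.map_id]
        infer_instance
end

section
/- Suppose F detects isomorphisms. Let X be an object of T such that F X is an injective object of A and such that some (F, F X)-Eilenberg–MacLane object exists. Then X itself is an (F, F X)-Eilenberg–MacLane object; concretely, for every object Y of T the map Hom_T(Y, X) → Hom_A(F Y, F X) given by f ↦ F f is a bijection. -/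
open CategoryTheory Limits Pretriangulated

universe w v u v' u'

variable {T : Type u} [Category.{v} T] [HasZeroObject T] [HasShift T ℤ]
  [Preadditive T] [∀ n : ℤ, (CategoryTheory.shiftFunctor T n).Additive] [Pretriangulated T]
variable {A : Type u'} [Category.{v'} A] [Abelian A]

/-!
The `(F, F X)`-Eilenberg–MacLane object `E` represents `Hom_A(F -, F X)`, so it receives a map
`φ : X ⟶ E` corresponding to `𝟙 (F X)`. By Yoneda, `F φ` composed with the canonical isomorphism
`F E ≅ F X` is the identity, so `F φ` is an isomorphism and hence so is `φ`, since `F` detects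
isomorphisms. Transporting the Eilenberg–MacLane structure along `φ` makes `X` itself an
`(F, F X)`-Eilenberg–MacLane object, whose representing bijection is then `f ↦ F f` up to an
isomorphism of `F X`.
-/

namespace IsEMObject

variable {F : T ⥤ A} {I : A} {E : T}

omit [HasZeroObject T] [HasShift T ℤ] [Preadditive T]
  [∀ n : ℤ, (shiftFunctor T n).Additive] [Pretriangulated T] [Abelian A]

theorem exists_isIso_bijective_map_comp (h : IsEMObject F I E) :
    ∃ ε : F.obj E ⟶ I, IsIso ε ∧ ∀ Y : T, Function.Bijective (fun f : Y ⟶ E => F.map f ≫ ε) := by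
  obtain ⟨e, hnat, hiso⟩ := h
  refine ⟨e E (𝟙 E), hiso, fun Y => ?_⟩
  convert (e Y).bijective using 1
  funext f
  rw [← hnat, Category.comp_id]

theorem bijective_map (h : IsEMObject F (F.obj E) E) (Y : T) :
    Function.Bijective (fun f : Y ⟶ E => F.map f) := by
  obtain ⟨ε, hε, hbij⟩ := h.exists_isIso_bijective_map_comp
  convert (asIso ε).symm.homToEquiv.bijective.comp (hbij Y) using 1
  funext f
  simp

theorem of_iso {X : T} (h : IsEMObject F I E) (φ : X ≅ E) : IsEMObject F I X := by
  obtain ⟨e, hnat, hiso⟩ := h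
  refine ⟨fun Y => φ.homToEquiv.trans (e Y), fun Y Z f g => ?_, ?_⟩
  · simp [hnat]
  · simp only [Equiv.trans_apply, Iso.homToEquiv_apply, Category.id_comp]
    rw [← Category.comp_id φ.hom, hnat]
    infer_instance

theorem nonempty_iso [F.ReflectsIsomorphisms] {X : T} (h : IsEMObject F (F.obj X) E) :
    Nonempty (X ≅ E) := by
  obtain ⟨ε, hε, hbij⟩ := h.exists_isIso_bijective_map_comp
  obtain ⟨φ, hφ⟩ := (hbij X).surjective (𝟙 _)
  have : IsIso (F.map φ ≫ ε) := by rw [show F.map φ ≫ ε = 𝟙 _ from hφ]; infer_instance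
  have : IsIso (F.map φ) := IsIso.of_isIso_comp_right _ ε
  have : IsIso φ := isIso_of_reflects_iso φ F
  exact ⟨asIso φ⟩

end IsEMObject

theorem isEMObject_of_injective_image_general
    (F : T ⥤ A)
    (hdet : ∀ ⦃X Y : T⦄ (f : X ⟶ Y), IsIso f ↔ IsIso (F.map f))
    (X : T)
    (hEM : ∃ E : T, IsEMObject F (F.obj X) E) :
    IsEMObject F (F.obj X) X ∧
      ∀ Y : T, Function.Bijective (fun f : Y ⟶ X => F.map f) := by
  have : F.ReflectsIsomorphisms := ⟨fun f hf => (hdet f).mpr hf⟩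
  obtain ⟨E, hE⟩ := hEM
  obtain ⟨φ⟩ := hE.nonempty_iso
  have hX : IsEMObject F (F.obj X) X := hE.of_iso φ
  exact ⟨hX, hX.bijective_map⟩

/-- If `F` detects isomorphisms, `F X` is injective and some `(F, F X)`-Eilenberg–MacLane
object exists, then `X` itself is an `(F, F X)`-Eilenberg–MacLane object; concretely,
`f ↦ F f : Hom_T(Y, X) → Hom_A(F Y, F X)` is a bijection for every `Y`. -/
theorem isEMObject_of_injective_image
    (F : T ⥤ A) [F.Additive] [F.IsHomological]
    (SA : A ≌ A) (comm : CategoryTheory.shiftFunctor T (1 : ℤ) ⋙ F ≅ F ⋙ SA.functor)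
    (hdet : ∀ ⦃X Y : T⦄ (f : X ⟶ Y), IsIso f ↔ IsIso (F.map f))
    (X : T) (hinj : Injective (F.obj X))
    (hEM : ∃ E : T, IsEMObject F (F.obj X) E) :
    IsEMObject F (F.obj X) X ∧
      ∀ Y : T, Function.Bijective (fun f : Y ⟶ X => F.map f) :=
  isEMObject_of_injective_image_general F hdet X hEM
end

section
/- Suppose F detects isomorphisms and for every injective object I of A there exists an (F,I)-Eilenberg–MacLane object. Then every retract in T of an F-injective object is again F-injective. -/
open CategoryTheory Limits Pretriangulated

universe w v u v' u'

variable {T : Type u} [Category.{v} T] [HasZeroObject T] [HasShift T ℤ]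
  [Preadditive T] [∀ n : ℤ, (CategoryTheory.shiftFunctor T n).Additive] [Pretriangulated T]
variable {A : Type u'} [Category.{v'} A] [Abelian A]

/-- Retracts in `T` of `F`-injective objects are again `F`-injective. -/
theorem fInjective_of_retract
    (F : T ⥤ A) [F.Additive] [F.IsHomological]
    (SA : A ≌ A) (comm : CategoryTheory.shiftFunctor T (1 : ℤ) ⋙ F ≅ F ⋙ SA.functor)
    (hdet : ∀ ⦃X Y : T⦄ (f : X ⟶ Y), IsIso f ↔ IsIso (F.map f))
    (hEM : ∀ I : A, Injective I → ∃ E : T, IsEMObject F I E)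
    {X E : T} (hE : FInjective F E)
    (s : X ⟶ E) (r : E ⟶ X) (hsr : s ≫ r = 𝟙 X) :
    FInjective F X := by
  obtain ⟨I, hI, e, hnat, hiso⟩ := hE
  haveI := hiso
  have hsr' : F.map s ≫ F.map r = 𝟙 (F.obj X) := by
    rw [← F.map_comp, hsr, F.map_id]
  have hFX : Injective (F.obj X) := by
    constructor
    intro Z W g f hf
    obtain ⟨h, hh⟩ := hI.factors (g ≫ F.map s ≫ e E (𝟙 E)) f
    refine ⟨h ≫ inv (e E (𝟙 E)) ≫ F.map r, ?_⟩
    rw [← Category.assoc, hh]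
    simp [hsr']
  obtain ⟨E', e', hnat', hiso'⟩ := hEM (F.obj X) hFX
  haveI := hiso'
  set f : X ⟶ E' := (e' X).symm (𝟙 (F.obj X)) with hfdef
  have hf : F.map f ≫ e' E' (𝟙 E') = 𝟙 (F.obj X) := by
    have h1 := hnat' f (𝟙 E')
    rw [Category.comp_id] at h1
    rw [← h1, hfdef, Equiv.apply_symm_apply]
  have hFf : IsIso (F.map f) := by
    have : F.map f = 𝟙 (F.obj X) ≫ inv (e' E' (𝟙 E')) := by
      rw [← hf]; simp
    rw [this]; infer_instance
  haveI hfiso : IsIso f := (hdet f).2 hFf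
  refine ⟨F.obj X, hFX, fun Y =>
    Equiv.trans ⟨fun g => g ≫ f, fun g => g ≫ inv f,
      fun g => by simp, fun g => by simp⟩ (e' Y), ?_, ?_⟩
  · intro Y Z g h
    simp only [Equiv.trans_apply, Equiv.coe_fn_mk, Category.assoc]
    exact hnat' g (h ≫ f)
  · simp only [Equiv.trans_apply, Equiv.coe_fn_mk, Category.id_comp, hfdef,
      Equiv.apply_symm_apply]
    infer_instance
end

section
/- Suppose that for every injective object I of A there exists an (F,I)-Eilenberg–MacLane object. Let T_{F-inj} denote the full subcategory of T consisting of the F-injective objects and let A_inj denote the full subcategory of A consisting of the injective objects. Then F restricts to a functor T_{F-inj} → A_inj (i.e. F sends F-injective objects to injective objects of A) and this restricted functor is an equivalence of categories: it is fully faithful and essentially surjective. -/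
open CategoryTheory Limits Pretriangulated

universe w v u v' u'

variable {T : Type u} [Category.{v} T] [HasZeroObject T] [HasShift T ℤ]
  [Preadditive T] [∀ n : ℤ, (CategoryTheory.shiftFunctor T n).Additive] [Pretriangulated T]
variable {A : Type u'} [Category.{v'} A] [Abelian A]

/-- `F` restricts to an equivalence between the full subcategory of `F`-injective objects
of `T` and the full subcategory of injective objects of `A`: it sends `F`-injective
objects to injective objects, is fully faithful on `F`-injective objects, and every
injective object of `A` is isomorphic to the image of an `F`-injective object. -/
theorem fInjectives_equivalent_to_injectives
    (F : T ⥤ A) [F.Additive] [F.IsHomological]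
    (SA : A ≌ A) (comm : CategoryTheory.shiftFunctor T (1 : ℤ) ⋙ F ≅ F ⋙ SA.functor)
    (hEM : ∀ I : A, Injective I → ∃ E : T, IsEMObject F I E) :
    (∀ E : T, FInjective F E → Injective (F.obj E)) ∧
    (∀ E E' : T, FInjective F E → FInjective F E' →
        Function.Bijective (fun f : E ⟶ E' => F.map f)) ∧
    (∀ I : A, Injective I → ∃ E : T, FInjective F E ∧ Nonempty (F.obj E ≅ I)) := by
  refine ⟨?_, ?_, ?_⟩
  · rintro E ⟨I, hI, e, hnat, hiso⟩
    exact Injective.of_iso (asIso (e E (𝟙 E))).symm hI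
  · rintro E E' hE ⟨I, hI, e, hnat, hiso⟩
    have key : ∀ f : E ⟶ E', F.map f = e E f ≫ inv (e E' (𝟙 E')) := by
      intro f
      have h := hnat f (𝟙 E')
      rw [Category.comp_id] at h
      rw [h]
      simp
    constructor
    · intro f g h
      apply (e E).injective
      simp only [key] at h
      exact (cancel_mono (inv (e E' (𝟙 E')))).mp h
    · intro φ
      refine ⟨(e E).symm (φ ≫ e E' (𝟙 E')), ?_⟩
      simp [key]
  · intro I hI
    obtain ⟨E, e, hnat, hiso⟩ := hEM I hI
    exact ⟨E, ⟨I, hI, e, hnat, hiso⟩, ⟨asIso (e E (𝟙 E))⟩⟩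
end

section
/- Suppose A has enough injectives and for every injective object I of A there exists an (F,I)-Eilenberg–MacLane object. Then T has enough F-injectives: every object X of T admits a morphism X → G to an F-injective object G such that F applied to this morphism is a monomorphism in A (equivalently, such that the morphism is F-monic). -/
open CategoryTheory Limits Pretriangulated

universe w v u v' u'

variable {T : Type u} [Category.{v} T] [HasZeroObject T] [HasShift T ℤ]
  [Preadditive T] [∀ n : ℤ, (CategoryTheory.shiftFunctor T n).Additive] [Pretriangulated T]
variable {A : Type u'} [Category.{v'} A] [Abelian A]

/-- `T` has enough `F`-injectives: every object `X` of `T` admits a morphism to an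
`F`-injective object `G` which becomes a monomorphism after applying `F`
(equivalently, which is `F`-monic). -/
theorem enough_fInjectives [EnoughInjectives A]
    (F : T ⥤ A) [F.Additive] [F.IsHomological]
    (SA : A ≌ A) (comm : CategoryTheory.shiftFunctor T (1 : ℤ) ⋙ F ≅ F ⋙ SA.functor)
    (hEM : ∀ I : A, Injective I → ∃ E : T, IsEMObject F I E)
    (X : T) :
    ∃ (G : T) (g : X ⟶ G), FInjective F G ∧ Mono (F.map g) := by
  obtain ⟨E, e, hnat, hiso⟩ := hEM (Injective.under (F.obj X))
    (Injective.injective_under (F.obj X))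
  refine ⟨E, (e X).symm (Injective.ι (F.obj X)),
    ⟨Injective.under (F.obj X), Injective.injective_under _, e, hnat, hiso⟩, ?_⟩
  have h := hnat ((e X).symm (Injective.ι (F.obj X))) (𝟙 E)
  rw [Category.comp_id, Equiv.apply_symm_apply] at h
  have : Mono (F.map ((e X).symm (Injective.ι (F.obj X))) ≫ e E (𝟙 E)) := by
    rw [← h]; infer_instance
  exact mono_of_mono _ (e E (𝟙 E))
end

section
/- Let X• be a cosimplicial object of T, let I be an injective object of A and let E be an (F,I)-Eilenberg–MacLane object. Then for every s ≥ 0 there is an isomorphism of abelian groups, natural in X•, π_s Hom_T(X•, E) ≅ Hom_A(H^s(F X•), I), where π_s Hom_T(X•, E) is the s-th homology of the Moore chain complex of the simplicial abelian group [n] ↦ Hom_T(Xⁿ, E), and H^s(F X•) is the s-th cohomology of the cochain complex associated to the cosimplicial object F X• of A (with differential the alternating sum of the coface maps). -/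
open CategoryTheory Limits Pretriangulated

universe w v u v' u'

variable {T : Type u} [Category.{v} T] [HasZeroObject T] [HasShift T ℤ]
  [Preadditive T] [∀ n : ℤ, (CategoryTheory.shiftFunctor T n).Additive] [Pretriangulated T]
variable {A : Type u'} [Category.{v'} A] [Abelian A]

open AlgebraicTopology

/-- The Moore chain complex (with alternating sum differentials) of the simplicial abelian
group `[n] ↦ Hom_T(Xⁿ, E)` associated to a cosimplicial object `X` of `T`. -/
noncomputable def homComplex (E : T) (X : CosimplicialObject T) : ChainComplex AddCommGrpCat ℕ :=
  (alternatingFaceMapComplex AddCommGrpCat).obj (X.op ⋙ preadditiveYoneda.obj E)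

/-- The cochain complex associated to the cosimplicial object `F X•` of `A`, with
differentials the alternating sums of the coface maps. -/
noncomputable def imageComplex (F : T ⥤ A) (X : CosimplicialObject T) : CochainComplex A ℕ :=
  (alternatingCofaceMapComplex A).obj (X ⋙ F)

/-!
Since `E` is an Eilenberg–MacLane object, `Hom_T(-, E) ≅ Hom_A(F -, I)` naturally, so the
simplicial abelian group `Hom_T(X•, E)` is `Hom_A(F X•, I)`, whose Moore complex is
`Hom_A(-, I)` applied to the cochain complex of `F X•`. As `I` is injective, `Hom_A(-, I)` is
exact and therefore commutes with (co)homology.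
-/

open HomologicalComplex Opposite

section

variable {V : Type*} [Category V] [Preadditive V] {V' : Type*} [Category V'] [Preadditive V']
  [CategoryWithHomology V] [CategoryWithHomology V'] (G : V ⥤ V') [G.Additive]
  [G.PreservesHomology]

noncomputable def CategoryTheory.Functor.mapHomologicalComplexCompHomologyFunctorIso
    {ι : Type*} (c : ComplexShape ι) (i : ι) :
    G.mapHomologicalComplex c ⋙ homologyFunctor V' c i ≅ homologyFunctor V c i ⋙ G :=
  Functor.isoWhiskerLeft (shortComplexFunctor V c i) (ShortComplex.homologyFunctorIso G)

noncomputable def alternatingFaceMapComplexHomologyCompIso (s : ℕ) :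
    alternatingFaceMapComplex V ⋙ homologyFunctor V _ s ⋙ G ≅
      (SimplicialObject.whiskering V V').obj G ⋙ alternatingFaceMapComplex V' ⋙
        homologyFunctor V' _ s :=
  Functor.isoWhiskerLeft _ (G.mapHomologicalComplexCompHomologyFunctorIso _ s).symm ≪≫
    Functor.isoWhiskerRight (eqToIso (map_alternatingFaceMapComplex G)) (homologyFunctor V' _ s)

end

noncomputable def alternatingCofaceMapComplexOpIso {C : Type*} [Category C] [Preadditive C] :
    (alternatingCofaceMapComplex C).op ⋙ opFunctor C (ComplexShape.up ℕ) ≅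
      (cosimplicialSimplicialEquiv C).functor ⋙ alternatingFaceMapComplex Cᵒᵖ :=
  NatIso.ofComponents
    (fun X => Hom.isoOfComponents (fun _ => Iso.refl _) (by
      rintro _ n rfl
      erw [Category.id_comp, Category.comp_id]
      refine (alternatingFaceMapComplex_obj_d _ n).trans ?_
      exact Quiver.Hom.unop_inj ((AlternatingCofaceMapComplex.d_eq_unop_d X.unop n).symm.trans
        (CochainComplex.of_d _ _ n).symm)))
    (fun _ => by ext; exact (Category.comp_id _).trans (Category.id_comp _).symm)

section

variable {C : Type u} [Category.{v} C] {D : Type u'} [Category.{v'} D] (F : C ⥤ D) {I : D} {E : C}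
  (e : ∀ X : C, (X ⟶ E) ≃ (F.obj X ⟶ I))
  (he : ∀ ⦃X Y : C⦄ (f : X ⟶ Y) (g : Y ⟶ E), e X (f ≫ g) = F.map f ≫ e Y g)
include he

lemma apply_eq_map_comp_apply_id {X : C} (g : X ⟶ E) : e X g = F.map g ≫ e E (𝟙 E) := by
  simpa using he g (𝟙 E)

variable [Preadditive C] [Preadditive D] [F.Additive]

noncomputable def addEquivOfNatural (X : C) : (X ⟶ E) ≃+ (F.obj X ⟶ I) :=
  { e X with
    map_add' := fun a b => by
      change e X (a + b) = e X a + e X b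
      rw [apply_eq_map_comp_apply_id F e he (a + b), apply_eq_map_comp_apply_id F e he a,
        apply_eq_map_comp_apply_id F e he b, F.map_add, Preadditive.add_comp] }

/-- The Hom-groups of `C` and `D` live in the universes `v` and `v'`, so the natural
isomorphism `Hom(-, E) ≅ Hom(F -, I)` can only be stated after lifting both to `max v v'`. -/
noncomputable def preadditiveYonedaUliftIso :
    preadditiveYoneda.obj E ⋙ AddCommGrpCat.uliftFunctor.{v'} ≅
      F.op ⋙ preadditiveYoneda.obj I ⋙ AddCommGrpCat.uliftFunctor.{v} :=
  NatIso.ofComponents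
    (fun X => (AddEquiv.ulift.trans ((addEquivOfNatural F e he X.unop).trans
      AddEquiv.ulift.symm)).toAddCommGrpIso)
    (fun f => by
      ext x
      exact congrArg ULift.up (he f.unop x.down))

end

section

variable {C : Type u} [Category.{v} C] [Preadditive C] {D : Type u'} [Category.{v'} D] [Abelian D]

noncomputable def homComplexHomologyFunctor (E : C) (s : ℕ) :
    (CosimplicialObject C)ᵒᵖ ⥤ AddCommGrpCat.{v} :=
  (cosimplicialSimplicialEquiv C).functor ⋙
    (SimplicialObject.whiskering Cᵒᵖ AddCommGrpCat).obj (preadditiveYoneda.obj E) ⋙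
      alternatingFaceMapComplex _ ⋙ homologyFunctor _ _ s

noncomputable def homFromCohomologyFunctor (F : C ⥤ D) (I : D) (s : ℕ) :
    (CosimplicialObject C)ᵒᵖ ⥤ AddCommGrpCat.{v'} :=
  ((CosimplicialObject.whiskering C D).obj F ⋙ alternatingCofaceMapComplex D ⋙
    homologyFunctor D _ s).op ⋙ preadditiveYoneda.obj I

noncomputable def homComplexHomologyUliftIso (F : C ⥤ D) [F.Additive] (I : D) [Injective I]
    (E : C) (η : preadditiveYoneda.obj E ⋙ AddCommGrpCat.uliftFunctor.{v'} ≅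
      F.op ⋙ preadditiveYoneda.obj I ⋙ AddCommGrpCat.uliftFunctor.{v}) (s : ℕ) :
    homComplexHomologyFunctor E s ⋙ AddCommGrpCat.uliftFunctor.{v'} ≅
      homFromCohomologyFunctor F I s ⋙ AddCommGrpCat.uliftFunctor.{v} :=
  have := (Injective.injective_iff_preservesEpimorphisms_preadditiveYoneda_obj I).1 ‹_›
  have := Functor.preservesHomology_of_preservesEpis_and_kernels (preadditiveYoneda.obj I)
  calc homComplexHomologyFunctor E s ⋙ AddCommGrpCat.uliftFunctor.{v'}
    _ ≅ (cosimplicialSimplicialEquiv C).functor ⋙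
          (SimplicialObject.whiskering Cᵒᵖ _).obj
            (preadditiveYoneda.obj E ⋙ AddCommGrpCat.uliftFunctor.{v'}) ⋙
          alternatingFaceMapComplex _ ⋙ homologyFunctor _ _ s :=
      Functor.isoWhiskerLeft ((cosimplicialSimplicialEquiv C).functor ⋙
          (SimplicialObject.whiskering Cᵒᵖ AddCommGrpCat).obj (preadditiveYoneda.obj E))
        (alternatingFaceMapComplexHomologyCompIso AddCommGrpCat.uliftFunctor.{v'} s)
    _ ≅ (cosimplicialSimplicialEquiv C).functor ⋙
          (SimplicialObject.whiskering Cᵒᵖ _).obj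
            (F.op ⋙ preadditiveYoneda.obj I ⋙ AddCommGrpCat.uliftFunctor.{v}) ⋙
          alternatingFaceMapComplex _ ⋙ homologyFunctor _ _ s :=
      Functor.isoWhiskerLeft (cosimplicialSimplicialEquiv C).functor
        (Functor.isoWhiskerRight ((SimplicialObject.whiskering Cᵒᵖ _).mapIso η) _)
    _ ≅ (cosimplicialSimplicialEquiv C).functor ⋙
          (SimplicialObject.whiskering Cᵒᵖ _).obj (F.op ⋙ preadditiveYoneda.obj I) ⋙
          alternatingFaceMapComplex _ ⋙ homologyFunctor _ _ s ⋙
            AddCommGrpCat.uliftFunctor.{v} :=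
      Functor.isoWhiskerLeft ((cosimplicialSimplicialEquiv C).functor ⋙
          (SimplicialObject.whiskering Cᵒᵖ _).obj (F.op ⋙ preadditiveYoneda.obj I))
        (alternatingFaceMapComplexHomologyCompIso AddCommGrpCat.uliftFunctor.{v} s).symm
    _ ≅ (cosimplicialSimplicialEquiv C).functor ⋙
          (SimplicialObject.whiskering Cᵒᵖ Dᵒᵖ).obj F.op ⋙
          alternatingFaceMapComplex _ ⋙ homologyFunctor _ _ s ⋙
            preadditiveYoneda.obj I ⋙ AddCommGrpCat.uliftFunctor.{v} :=
      Functor.isoWhiskerLeft ((cosimplicialSimplicialEquiv C).functor ⋙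
          (SimplicialObject.whiskering Cᵒᵖ Dᵒᵖ).obj F.op)
        (Functor.isoWhiskerRight
          (alternatingFaceMapComplexHomologyCompIso (preadditiveYoneda.obj I) s).symm
          AddCommGrpCat.uliftFunctor.{v})
    _ ≅ ((CosimplicialObject.whiskering C D).obj F ⋙ alternatingCofaceMapComplex D).op ⋙
          opFunctor D _ ⋙ homologyFunctor _ _ s ⋙
            preadditiveYoneda.obj I ⋙ AddCommGrpCat.uliftFunctor.{v} :=
      Functor.isoWhiskerRight (Functor.isoWhiskerLeft ((CosimplicialObject.whiskering C D).obj F).op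
        alternatingCofaceMapComplexOpIso.symm)
        (homologyFunctor _ _ s ⋙ preadditiveYoneda.obj I ⋙ AddCommGrpCat.uliftFunctor.{v})
    _ ≅ homFromCohomologyFunctor F I s ⋙ AddCommGrpCat.uliftFunctor.{v} :=
      Functor.isoWhiskerLeft ((CosimplicialObject.whiskering C D).obj F ⋙
          alternatingCofaceMapComplex D).op
        (Functor.isoWhiskerRight (homologyOpNatIso D _ s)
          (preadditiveYoneda.obj I ⋙ AddCommGrpCat.uliftFunctor.{v}))

end

section

variable {J : Type*} [Category J] {P : J ⥤ AddCommGrpCat.{v}} {Q : J ⥤ AddCommGrpCat.{v'}}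
  (η : P ⋙ AddCommGrpCat.uliftFunctor.{v'} ≅ Q ⋙ AddCommGrpCat.uliftFunctor.{v})

noncomputable def addEquivOfUliftIso (j : J) : P.obj j ≃+ Q.obj j :=
  AddEquiv.ulift.symm.trans ((η.app j).addCommGroupIsoToAddEquiv.trans AddEquiv.ulift)

lemma addEquivOfUliftIso_naturality {j j' : J} (f : j ⟶ j') (x : P.obj j) :
    addEquivOfUliftIso η j' (P.map f x) = Q.map f (addEquivOfUliftIso η j x) :=
  congrArg ULift.down (ConcreteCategory.congr_hom (η.hom.naturality f) (ULift.up x))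

end

theorem pi_homComplex_iso_hom_cohomology_general
    (F : T ⥤ A) [F.Additive]
    (I : A) (hI : Injective I) (E : T) (hE : IsEMObject F I E) (s : ℕ) :
    ∃ e : ∀ X : CosimplicialObject T,
        ((homComplex E X).homology s) ≃+ (((imageComplex F X).homology s) ⟶ I),
      ∀ (X Y : CosimplicialObject T) (f : X ⟶ Y) (g : (homComplex E Y).homology s),
        e X (HomologicalComplex.homologyMap
            ((alternatingFaceMapComplex AddCommGrpCat).map
              (CategoryTheory.Functor.whiskerRight (NatTrans.op f) (preadditiveYoneda.obj E))) s g) =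
          HomologicalComplex.homologyMap
              ((alternatingCofaceMapComplex A).map (CategoryTheory.Functor.whiskerRight f F)) s ≫
            e Y g := by
  obtain ⟨e, he, -⟩ := hE
  let η := homComplexHomologyUliftIso F I E (preadditiveYonedaUliftIso F e he) s
  exact ⟨fun X => addEquivOfUliftIso η (op X), fun _ _ f => addEquivOfUliftIso_naturality η f.op⟩

/-- For an `(F,I)`-Eilenberg–MacLane object `E`, there is an isomorphism of abelian groups
`π_s Hom_T(X•, E) ≅ Hom_A(H^s(F X•), I)`, natural in the cosimplicial object `X•`. -/
theorem pi_homComplex_iso_hom_cohomology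
    (F : T ⥤ A) [F.Additive] [F.IsHomological]
    (SA : A ≌ A) (comm : CategoryTheory.shiftFunctor T (1 : ℤ) ⋙ F ≅ F ⋙ SA.functor)
    (I : A) (hI : Injective I) (E : T) (hE : IsEMObject F I E) (s : ℕ) :
    ∃ e : ∀ X : CosimplicialObject T,
        ((homComplex E X).homology s) ≃+ (((imageComplex F X).homology s) ⟶ I),
      ∀ (X Y : CosimplicialObject T) (f : X ⟶ Y) (g : (homComplex E Y).homology s),
        e X (HomologicalComplex.homologyMap
            ((alternatingFaceMapComplex AddCommGrpCat).map
              (CategoryTheory.Functor.whiskerRight (NatTrans.op f) (preadditiveYoneda.obj E))) s g) =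
          HomologicalComplex.homologyMap
              ((alternatingCofaceMapComplex A).map (CategoryTheory.Functor.whiskerRight f F)) s ≫
            e Y g :=
  pi_homComplex_iso_hom_cohomology_general F I hI E hE s
end

section
/- Suppose A has enough injectives and for every injective object I of A there exists an (F,I)-Eilenberg–MacLane object. Call a map f : X• → Y• of cosimplicial objects of T an F-injective equivalence if for every F-injective object G of T and every s ≥ 0 the induced map π_s Hom_T(Y•, G) → π_s Hom_T(X•, G) is an isomorphism. Then f is an F-injective equivalence if and only if for every s ≥ 0 the induced map H^s(F X•) → H^s(F Y•) is an isomorphism in A, i.e. if and only if f induces a quasi-isomorphism of the cochain complexes associated to F X• and F Y•. -/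
/-!
For an `(F,I)`-Eilenberg–MacLane object `E`, the natural isomorphism
`Hom_T(-, E) ≅ Hom_A(F -, I)` identifies the simplicial abelian group `Hom_T(X•, E)` with
`Hom_A(F X•, I)`, whose Moore complex is `Hom_A(-, I)` applied to the cochain complex of `F X•`.
Since `I` is injective, `Hom_A(-, I)` is exact, so `π_s Hom_T(X•, E) ≅ Hom_A(H^s(F X•), I)`
naturally in `X•`. Thus `f` is an `F`-injective equivalence iff `Hom_A(H^s(F f), I)` is
bijective for every injective `I`, and since `A` has enough injectives this holds iff
`H^s(F f)` is an isomorphism.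
-/

open CategoryTheory Limits Pretriangulated

universe w v u v' u'

variable {T : Type u} [Category.{v} T] [HasZeroObject T] [HasShift T ℤ]
  [Preadditive T] [∀ n : ℤ, (CategoryTheory.shiftFunctor T n).Additive] [Pretriangulated T]
variable {A : Type u'} [Category.{v'} A] [Abelian A]

open AlgebraicTopology

open HomologicalComplex

section Injectives

variable {C : Type*} [Category C]

lemma isIso_of_forall_injective_isIso_preadditiveYoneda_map [Preadditive C] [Balanced C]
    [EnoughInjectives C] {M N : C} (u : M ⟶ N)
    (h : ∀ I : C, Injective I → IsIso ((preadditiveYoneda.obj I).map u.op)) : IsIso u := by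
  have bij (I : C) (hI : Injective I) : Function.Bijective (fun g : N ⟶ I => u ≫ g) :=
    (ConcreteCategory.isIso_iff_bijective _).mp (h I hI)
  have : Mono u := by
    obtain ⟨g, hg⟩ := (bij _ inferInstance).2 (Injective.ι M)
    exact mono_of_mono_fac hg
  have : Epi u := ⟨fun a b hab => by
    rw [← cancel_mono (Injective.ι _)]
    exact (bij _ inferInstance).1 (by simp only [reassoc_of% hab])⟩
  exact isIso_of_mono_of_epi u

instance preservesHomology_preadditiveYoneda_obj_comp_uliftFunctor [Abelian C]
    (I : C) [Injective I] :
    (preadditiveYoneda.obj I ⋙ AddCommGrpCat.uliftFunctor.{w}).PreservesHomology := by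
  have := (Injective.injective_iff_preservesEpimorphisms_preadditiveYoneda_obj I).mp ‹_›
  exact Functor.preservesHomology_of_preservesEpis_and_kernels _

end Injectives

section Homology

variable {C D : Type*} [Category C] [Category D]

lemma quasiIsoAt_iff_of_arrow_mk_iso [HasZeroMorphisms C] [CategoryWithHomology C] {ι : Type*}
    {c : ComplexShape ι} {K L K' L' : HomologicalComplex C c} (φ : K ⟶ L) (φ' : K' ⟶ L')
    (e : Arrow.mk φ ≅ Arrow.mk φ') (i : ι) : QuasiIsoAt φ i ↔ QuasiIsoAt φ' i := by
  simp only [quasiIsoAt_iff_isIso_homologyMap]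
  exact (MorphismProperty.isomorphisms C).arrow_mk_iso_iff
    ((homologyFunctor C c i).mapArrow.mapIso e)

lemma quasiIsoAt_map_iff_isIso_map_homologyMap [Abelian C] [Abelian D] (G : C ⥤ D) [G.Additive]
    [G.PreservesHomology] {ι : Type*} {c : ComplexShape ι} {K L : HomologicalComplex C c}
    (φ : K ⟶ L) (i : ι) :
    QuasiIsoAt ((G.mapHomologicalComplex c).map φ) i ↔ IsIso (G.map (homologyMap φ i)) := by
  rw [quasiIsoAt_iff_isIso_homologyMap]
  exact (MorphismProperty.isomorphisms D).arrow_mk_iso_iff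
    (Arrow.isoMk' _ _ (((shortComplexFunctor C c i).obj K).mapHomologyIso G)
      (((shortComplexFunctor C c i).obj L).mapHomologyIso G)
      (ShortComplex.mapHomologyIso_hom_naturality ((shortComplexFunctor C c i).map φ) G).symm)

lemma quasiIsoAt_alternatingFaceMapComplex_map_whiskerRight_iff_of_iso [Abelian D]
    {G₁ G₂ : C ⥤ D} (η : G₁ ≅ G₂) {S S' : SimplicialObject C} (φ : S ⟶ S') (n : ℕ) :
    QuasiIsoAt ((alternatingFaceMapComplex D).map (Functor.whiskerRight φ G₁)) n ↔
      QuasiIsoAt ((alternatingFaceMapComplex D).map (Functor.whiskerRight φ G₂)) n :=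
  quasiIsoAt_iff_of_arrow_mk_iso _ _ ((alternatingFaceMapComplex D).mapArrow.mapIso
    (Arrow.isoMk' _ _ (Functor.isoWhiskerLeft S η) (Functor.isoWhiskerLeft S' η) (by ext; simp))) n

lemma quasiIsoAt_alternatingFaceMapComplex_map_whiskerRight_iff [Abelian C] [Abelian D]
    (G : C ⥤ D) [G.Additive] [G.PreservesHomology] {S S' : SimplicialObject C} (φ : S ⟶ S')
    (n : ℕ) :
    QuasiIsoAt ((alternatingFaceMapComplex D).map (Functor.whiskerRight φ G)) n ↔
      IsIso (G.map (homologyMap ((alternatingFaceMapComplex C).map φ) n)) := by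
  rw [← quasiIsoAt_map_iff_isIso_map_homologyMap]
  exact quasiIsoAt_iff_of_arrow_mk_iso _ _
    (eqToIso (congrArg (fun H => H.mapArrow.obj (Arrow.mk φ))
      (map_alternatingFaceMapComplex G)).symm) n

end Homology

section Opposite

variable {C : Type*} [Category C]

noncomputable def alternatingFaceMapComplexOpIso [Preadditive C] :
    (cosimplicialSimplicialEquiv C).functor ⋙ alternatingFaceMapComplex Cᵒᵖ ≅
      (alternatingCofaceMapComplex C).op ⋙ opFunctor C (ComplexShape.up ℕ) :=
  NatIso.ofComponents
    (fun S => Hom.isoOfComponents (fun _ => Iso.refl _) (by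
      rintro i j (rfl : j + 1 = i)
      refine (Category.id_comp _).trans (Eq.trans ?_ (Category.comp_id _).symm)
      show (((alternatingCofaceMapComplex C).obj S.unop).d j (j + 1)).op =
        ((alternatingFaceMapComplex Cᵒᵖ).obj S.unop.op).d (j + 1) j
      simp only [alternatingCofaceMapComplex, AlternatingCofaceMapComplex.obj,
        CochainComplex.of_d, AlternatingCofaceMapComplex.objD, op_sum, op_zsmul,
        alternatingFaceMapComplex_obj_d, AlternatingFaceMapComplex.objD]
      rfl))
    (fun g => by ext; exact (Category.comp_id _).trans (Category.id_comp _).symm)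

lemma quasiIsoAt_alternatingFaceMapComplex_map_whiskerRight_op_iff [Abelian C] {D : Type*}
    [Category D] [Abelian D] (G : Cᵒᵖ ⥤ D) [G.Additive] [G.PreservesHomology]
    {S S' : CosimplicialObject C} (g : S ⟶ S') (n : ℕ) :
    QuasiIsoAt ((alternatingFaceMapComplex D).map (Functor.whiskerRight (NatTrans.op g) G)) n ↔
      IsIso (G.map (homologyMap ((alternatingCofaceMapComplex C).map g) n).op) :=
  (quasiIsoAt_alternatingFaceMapComplex_map_whiskerRight_iff G (NatTrans.op g) n).trans
    ((MorphismProperty.isomorphisms D).arrow_mk_iso_iff (G.mapArrow.mapIso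
      ((homologyFunctor Cᵒᵖ _ n).mapArrow.mapIso
          (Arrow.isoOfNatIso alternatingFaceMapComplexOpIso (Arrow.mk g.op)) ≪≫
        Arrow.isoMk' _ _ (homologyOp _ n) (homologyOp _ n) (homologyOp_hom_naturality _ n).symm)))

end Opposite

section EilenbergMacLane

variable {C : Type u} [Category.{v} C] [Preadditive C] {D : Type u'} [Category.{v'} D]
  {I : D} {E : C}

/-- The hom groups of `C` and `D` live in different universes, so both sides are lifted. -/
noncomputable def IsEMObject.uliftYonedaIso [Preadditive D] {F : C ⥤ D} [F.Additive]
    (h : IsEMObject F I E) :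
    preadditiveYoneda.obj E ⋙ AddCommGrpCat.uliftFunctor.{v'} ≅
      F.op ⋙ preadditiveYoneda.obj I ⋙ AddCommGrpCat.uliftFunctor.{v} :=
  let e := h.choose
  have he := h.choose_spec.1
  have he_eq (W : C) (k : W ⟶ E) : e W k = F.map k ≫ e E (𝟙 E) := by
    simpa using he k (𝟙 E)
  let eAdd (W : C) : (W ⟶ E) ≃+ (F.obj W ⟶ I) :=
    { e W with
      map_add' := fun k k' => by
        simp only [Equiv.toFun_as_coe, he_eq W, F.map_add, Preadditive.add_comp] }
  NatIso.ofComponents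
    (fun W => (AddEquiv.ulift.trans ((eAdd W.unop).trans AddEquiv.ulift.symm)).toAddCommGrpIso)
    (fun k => by ext g; exact congrArg ULift.up (he k.unop g.down))

theorem IsEMObject.quasiIsoAt_preadditiveYoneda_iff [Abelian D] {F : C ⥤ D} [F.Additive]
    (h : IsEMObject F I E) [Injective I] {X Y : CosimplicialObject C} (f : X ⟶ Y) (s : ℕ) :
    QuasiIsoAt ((alternatingFaceMapComplex AddCommGrpCat).map
        (Functor.whiskerRight (NatTrans.op f) (preadditiveYoneda.obj E))) s ↔
      IsIso ((preadditiveYoneda.obj I).map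
        (homologyMap ((alternatingCofaceMapComplex D).map (Functor.whiskerRight f F)) s).op) := by
  rw [quasiIsoAt_iff_isIso_homologyMap,
    ← isIso_iff_of_reflects_iso _ AddCommGrpCat.uliftFunctor.{v'},
    ← quasiIsoAt_alternatingFaceMapComplex_map_whiskerRight_iff,
    ← isIso_iff_of_reflects_iso _ AddCommGrpCat.uliftFunctor.{v}, ← Functor.comp_map]
  exact (quasiIsoAt_alternatingFaceMapComplex_map_whiskerRight_iff_of_iso h.uliftYonedaIso
    (NatTrans.op f) s).trans (quasiIsoAt_alternatingFaceMapComplex_map_whiskerRight_op_iff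
      (preadditiveYoneda.obj I ⋙ AddCommGrpCat.uliftFunctor.{v}) (Functor.whiskerRight f F) s)

end EilenbergMacLane

theorem fInjectiveEquivalence_iff_quasiIso_general [EnoughInjectives A]
    (F : T ⥤ A) [F.Additive]
    (hEM : ∀ I : A, Injective I → ∃ E : T, IsEMObject F I E)
    (X Y : CosimplicialObject T) (f : X ⟶ Y) :
    (∀ G : T, FInjective F G → ∀ s : ℕ,
        IsIso (HomologicalComplex.homologyMap
          ((alternatingFaceMapComplex AddCommGrpCat).map
            (CategoryTheory.Functor.whiskerRight (NatTrans.op f) (preadditiveYoneda.obj G))) s)) ↔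
      (∀ s : ℕ,
        IsIso (HomologicalComplex.homologyMap
          ((alternatingCofaceMapComplex A).map (CategoryTheory.Functor.whiskerRight f F)) s)) := by
  constructor
  · intro h s
    refine isIso_of_forall_injective_isIso_preadditiveYoneda_map _ fun I hI => ?_
    obtain ⟨E, hE⟩ := hEM I hI
    exact (hE.quasiIsoAt_preadditiveYoneda_iff f s).1
      ((quasiIsoAt_iff_isIso_homologyMap _ _).2 (h E ⟨I, hI, hE⟩ s))
  · rintro h G ⟨I, hI, hG⟩ s
    rw [← quasiIsoAt_iff_isIso_homologyMap, hG.quasiIsoAt_preadditiveYoneda_iff f s]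
    have := h s
    infer_instance

/-- A map `f : X• ⟶ Y•` of cosimplicial objects of `T` is an `F`-injective equivalence if and
only if it induces isomorphisms `H^s(F X•) → H^s(F Y•)` for all `s ≥ 0`, i.e. a
quasi-isomorphism of the associated cochain complexes. Here the `F`-injective equivalences
are the maps inducing isomorphisms on `π_s Hom_T(-, G)` for all `F`-injective `G` and all
`s ≥ 0`, where `π_s` is the `s`-th homology of the Moore chain complex of the simplicial
abelian group `[n] ↦ Hom_T(Xⁿ, G)`, and `H^s` is taken with respect to the alternating sum
of the coface maps. -/
theorem fInjectiveEquivalence_iff_quasiIso [EnoughInjectives A]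
    (F : T ⥤ A) [F.Additive] [F.IsHomological]
    (SA : A ≌ A) (comm : CategoryTheory.shiftFunctor T (1 : ℤ) ⋙ F ≅ F ⋙ SA.functor)
    (hEM : ∀ I : A, Injective I → ∃ E : T, IsEMObject F I E)
    (X Y : CosimplicialObject T) (f : X ⟶ Y) :
    (∀ G : T, FInjective F G → ∀ s : ℕ,
        IsIso (HomologicalComplex.homologyMap
          ((alternatingFaceMapComplex AddCommGrpCat).map
            (CategoryTheory.Functor.whiskerRight (NatTrans.op f) (preadditiveYoneda.obj G))) s)) ↔
      (∀ s : ℕ,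
        IsIso (HomologicalComplex.homologyMap
          ((alternatingCofaceMapComplex A).map (CategoryTheory.Functor.whiskerRight f F)) s)) :=
  fInjectiveEquivalence_iff_quasiIso_general F hEM X Y f
end
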